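/- Let (L, •, N) be an irreducible NIM-rep of the fusion ring GLM(Γ, δ) whose Γ-action has exactly two orbits, let ℓ₁ be a point in the first orbit with stabilizer H₁ = Stab_Γ(ℓ₁), and ℓ₂ a point in the second orbit with stabilizer H₂ = Stab_Γ(ℓ₂). Let H̄ᵢ denote the image of Hᵢ under the quotient map Γ → Γ/2Γ. Then δ ∈ H̄₁ if and only if δ ∈ H̄₂; that is, either δ ∈ H̄₁ ∩ H̄₂ or δ ∉ H̄₁ ∪ H̄₂. -/
import Mathlib


open scoped BigOperators

/-- The subgroup `2Γ = {g + g : g ∈ Γ}` of an additive abelian group `Γ`. -/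
def twoG (Γ : Type*) [AddCommGroup Γ] : AddSubgroup Γ :=
  (zsmulAddGroupHom 2 : Γ →+ Γ).range

/-- A NIM-rep of the fusion ring `GLM(Γ, δ)`: a finite set `L` with a `Γ`-action
together with multiplicity functions `N x : L → L → ℕ` for `x ∈ Γ/2Γ`, satisfying
the axioms coming from the fusion rules. -/
structure GLMNimRep (Γ : Type*) [AddCommGroup Γ] [Fintype Γ] (δ : Γ ⧸ twoG Γ)
    (L : Type*) [Fintype L] [AddAction Γ L] where
  N : (Γ ⧸ twoG Γ) → L → L → ℕ
  vadd_left : ∀ (g : Γ) (x : Γ ⧸ twoG Γ) (ℓ ℓ' : L),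
    N x (g +ᵥ ℓ) ℓ' = N (x + QuotientAddGroup.mk g) ℓ ℓ'
  vadd_right : ∀ (g : Γ) (x : Γ ⧸ twoG Γ) (ℓ ℓ' : L),
    N x ℓ (g +ᵥ ℓ') = N (x + QuotientAddGroup.mk g) ℓ ℓ'
  dual_symm : ∀ (x : Γ ⧸ twoG Γ) (ℓ ℓ' : L), N x ℓ ℓ' = N (x + δ) ℓ' ℓ
  fusion : ∀ (x y : Γ ⧸ twoG Γ) (ℓ ℓ' : L),
    ∑ t : L, N y ℓ t * N x t ℓ' =
      Nat.card {s : Γ //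
        (QuotientAddGroup.mk s : Γ ⧸ twoG Γ) = δ + x + y ∧ s +ᵥ ℓ = ℓ'}

/-- Irreducibility of a NIM-rep of `GLM(Γ, δ)`: the only nonempty subset closed
under the `Γ`-action and under the supports of all `N x` is the whole set. -/
def GLMNimRep.Irreducible {Γ : Type*} [AddCommGroup Γ] [Fintype Γ] {δ : Γ ⧸ twoG Γ}
    {L : Type*} [Fintype L] [AddAction Γ L] (M : GLMNimRep Γ δ L) : Prop :=
  ∀ S : Set L, S.Nonempty →
    (∀ (g : Γ) (ℓ : L), ℓ ∈ S → g +ᵥ ℓ ∈ S) →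
    (∀ (x : Γ ⧸ twoG Γ) (ℓ ℓ' : L), ℓ ∈ S → 0 < M.N x ℓ ℓ' → ℓ' ∈ S) →
    S = Set.univ

/-- `ℓ` and `ℓ'` lie in the same `Γ`-orbit. -/
def sameGOrbit (Γ : Type*) [AddCommGroup Γ] {L : Type*} [AddAction Γ L]
    (ℓ ℓ' : L) : Prop :=
  ∃ g : Γ, g +ᵥ ℓ = ℓ'

/-- `ℓ` and `ℓ'` lie in the same `2Γ`-orbit (orbit of the restricted action). -/
def sameTwoOrbit (Γ : Type*) [AddCommGroup Γ] {L : Type*} [AddAction Γ L]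
    (ℓ ℓ' : L) : Prop :=
  ∃ g ∈ twoG Γ, g +ᵥ ℓ = ℓ'

private lemma quot_add_self {Γ : Type*} [AddCommGroup Γ] (x : Γ ⧸ twoG Γ) : x + x = 0 := by
  induction x using QuotientAddGroup.induction_on with
  | H g =>
    rw [← QuotientAddGroup.mk_add]
    exact (QuotientAddGroup.eq_zero_iff _).2 ⟨g, two_zsmul g⟩

/-- for an irreducible NIM-rep of `GLM(Γ, δ)` with exactly two
`Γ`-orbits, with point stabilizers `H₁ = Stab_Γ(ℓ₁)` and `H₂ = Stab_Γ(ℓ₂)`, one has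
`δ ∈ H̄₁ ↔ δ ∈ H̄₂`, where `H̄ᵢ` is the image of `Hᵢ` in `Γ/2Γ`. -/
theorem stmt14 (Γ : Type*) [AddCommGroup Γ] [Fintype Γ] (hΓ : Even (Fintype.card Γ))
    (δ : Γ ⧸ twoG Γ) (L : Type*) [Fintype L] [Nonempty L] [AddAction Γ L]
    (M : GLMNimRep Γ δ L) (hirr : M.Irreducible)
    (ℓ₁ ℓ₂ : L) (hne : ¬ sameGOrbit Γ ℓ₁ ℓ₂)
    (hcov : ∀ ℓ : L, sameGOrbit Γ ℓ₁ ℓ ∨ sameGOrbit Γ ℓ₂ ℓ) :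
    δ ∈ (AddAction.stabilizer Γ ℓ₁).map (QuotientAddGroup.mk' (twoG Γ)) ↔
      δ ∈ (AddAction.stabilizer Γ ℓ₂).map (QuotientAddGroup.mk' (twoG Γ)) := by
  classical
  -- orbit relation helpers
  have horb_trans : ∀ ℓ ℓ' ℓ'' : L, sameGOrbit Γ ℓ ℓ' → sameGOrbit Γ ℓ' ℓ'' →
      sameGOrbit Γ ℓ ℓ'' := by
    rintro ℓ ℓ' ℓ'' ⟨g, rfl⟩ ⟨h, rfl⟩
    exact ⟨h + g, add_vadd h g ℓ⟩
  have horb_symm : ∀ ℓ ℓ' : L, sameGOrbit Γ ℓ ℓ' → sameGOrbit Γ ℓ' ℓ := by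
    rintro ℓ ℓ' ⟨g, rfl⟩
    exact ⟨-g, by rw [← add_vadd, neg_add_cancel, zero_vadd]⟩
  -- vanishing of fusion products across different orbits
  have hzero : ∀ (x y : Γ ⧸ twoG Γ) (ℓ ℓ' t : L), ¬ sameGOrbit Γ ℓ ℓ' →
      0 < M.N y ℓ t → M.N x t ℓ' = 0 := by
    intro x y ℓ ℓ' t hno hpos
    have hfus := M.fusion x y ℓ ℓ'
    have hempty : IsEmpty {s : Γ //
        (QuotientAddGroup.mk s : Γ ⧸ twoG Γ) = δ + x + y ∧ s +ᵥ ℓ = ℓ'} :=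
      ⟨fun ⟨s, _, hs⟩ => hno ⟨s, hs⟩⟩
    rw [Nat.card_of_isEmpty] at hfus
    have h0 := (Finset.sum_eq_zero_iff).1 hfus t (Finset.mem_univ t)
    rcases Nat.mul_eq_zero.1 h0 with h | h
    · omega
    · exact h
  -- there is an edge from orbit 1 to orbit 2
  obtain ⟨x₀, hx₀⟩ : ∃ x₀ : Γ ⧸ twoG Γ, 0 < M.N x₀ ℓ₁ ℓ₂ := by
    by_contra hno
    push_neg at hno
    have hall : ∀ x : Γ ⧸ twoG Γ, M.N x ℓ₁ ℓ₂ = 0 := fun x => Nat.le_zero.1 (hno x)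
    have hS := hirr {ℓ : L | sameGOrbit Γ ℓ₁ ℓ} ⟨ℓ₁, ⟨0, zero_vadd Γ ℓ₁⟩⟩
      (by rintro g ℓ ⟨h, rfl⟩; exact ⟨g + h, add_vadd g h ℓ₁⟩)
      (by
        intro x ℓ ℓ' hℓ hpos
        rcases hcov ℓ' with h' | h'
        · exact h'
        · exfalso
          rcases hℓ with ⟨g, rfl⟩
          rcases h' with ⟨h, rfl⟩
          rw [M.vadd_left, M.vadd_right, hall] at hpos
          exact lt_irrefl 0 hpos)
    exact hne (hS ▸ Set.mem_univ ℓ₂ : ℓ₂ ∈ {ℓ : L | sameGOrbit Γ ℓ₁ ℓ})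
  -- all edges from ℓ₁ go to orbit 2, all edges from ℓ₂ go to orbit 1
  have hbip1 : ∀ (x : Γ ⧸ twoG Γ) (t : L), sameGOrbit Γ ℓ₁ t → M.N x ℓ₁ t = 0 := by
    intro x t ht
    have hpos : 0 < M.N (x₀ + δ) ℓ₂ ℓ₁ := by rw [← M.dual_symm]; exact hx₀
    refine hzero x (x₀ + δ) ℓ₂ t ℓ₁ (fun h => hne ?_) hpos
    exact horb_trans _ _ _ ht (horb_symm _ _ h)
  have hbip2 : ∀ (x : Γ ⧸ twoG Γ) (t : L), sameGOrbit Γ ℓ₂ t → M.N x ℓ₂ t = 0 := by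
    intro x t ht
    refine hzero x x₀ ℓ₁ t ℓ₂ (fun h => hne ?_) hx₀
    exact horb_trans _ _ _ h (horb_symm _ _ ht)
  set f : (Γ ⧸ twoG Γ) → ℕ := fun z => M.N z ℓ₁ ℓ₂ with hf
  have hf21 : ∀ z : Γ ⧸ twoG Γ, M.N z ℓ₂ ℓ₁ = f (z + δ) := fun z => M.dual_symm z ℓ₂ ℓ₁
  -- positive diagonal fusion sums detect δ in the stabilizer image
  have key : ∀ (ℓ : L) (s : Γ), s +ᵥ ℓ = ℓ → (QuotientAddGroup.mk s : Γ ⧸ twoG Γ) = δ →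
      ∀ z : Γ ⧸ twoG Γ, 0 < ∑ t : L, M.N z ℓ t * M.N z t ℓ := by
    intro ℓ s hs hsδ z
    rw [M.fusion z z ℓ ℓ]
    have hz : δ + z + z = δ := by rw [add_assoc, quot_add_self, add_zero]
    have hnonempty : Nonempty {s' : Γ //
        (QuotientAddGroup.mk s' : Γ ⧸ twoG Γ) = δ + z + z ∧ s' +ᵥ ℓ = ℓ} :=
      ⟨⟨s, by rw [hz]; exact hsδ, hs⟩⟩
    exact Nat.card_pos
  have key2 : ∀ (ℓ : L) (z : Γ ⧸ twoG Γ), 0 < ∑ t : L, M.N z ℓ t * M.N z t ℓ →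
      ∃ s : Γ, s +ᵥ ℓ = ℓ ∧ (QuotientAddGroup.mk s : Γ ⧸ twoG Γ) = δ := by
    intro ℓ z hpos
    rw [M.fusion z z ℓ ℓ] at hpos
    have hz : δ + z + z = δ := by rw [add_assoc, quot_add_self, add_zero]
    obtain ⟨⟨s, hs1, hs2⟩⟩ := (Nat.card_pos_iff.1 hpos).1
    exact ⟨s, hs2, by rw [← hz]; exact hs1⟩
  -- extract a positive term from a positive sum
  have hterm : ∀ (ℓ : L) (z : Γ ⧸ twoG Γ), 0 < ∑ t : L, M.N z ℓ t * M.N z t ℓ →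
      ∃ t : L, 0 < M.N z ℓ t ∧ 0 < M.N z t ℓ := by
    intro ℓ z hpos
    by_contra hno
    push_neg at hno
    have : ∑ t : L, M.N z ℓ t * M.N z t ℓ = 0 := by
      refine Finset.sum_eq_zero fun t _ => ?_
      rcases Nat.eq_zero_or_pos (M.N z ℓ t) with h | h
      · rw [h, Nat.zero_mul]
      · rw [Nat.le_zero.1 (hno t h), Nat.mul_zero]
    omega
  -- characterization of δ ∈ H̄₁
  have char1 : (δ ∈ (AddAction.stabilizer Γ ℓ₁).map (QuotientAddGroup.mk' (twoG Γ))) ↔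
      ∃ z : Γ ⧸ twoG Γ, 0 < f z ∧ 0 < f (z + δ) := by
    constructor
    · rintro ⟨s, hs, hsδ⟩
      obtain ⟨t, ht1, ht2⟩ := hterm ℓ₁ 0 (key ℓ₁ s (AddAction.mem_stabilizer_iff.mp hs) hsδ 0)
      have htorb : sameGOrbit Γ ℓ₂ t := by
        rcases hcov t with h | h
        · exact absurd (hbip1 0 t h) (by omega)
        · exact h
      rcases htorb with ⟨g, rfl⟩
      refine ⟨QuotientAddGroup.mk g + δ, ?_, ?_⟩
      · rw [M.vadd_left, zero_add, hf21] at ht2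
        exact ht2
      · rw [add_assoc, quot_add_self, add_zero]
        rw [M.vadd_right, zero_add] at ht1
        exact ht1
    · rintro ⟨z, hz1, hz2⟩
      have hsum : 0 < ∑ t : L, M.N z ℓ₁ t * M.N z t ℓ₁ := by
        have hle : M.N z ℓ₁ ℓ₂ * M.N z ℓ₂ ℓ₁ ≤ ∑ t : L, M.N z ℓ₁ t * M.N z t ℓ₁ :=
          Finset.single_le_sum (f := fun t => M.N z ℓ₁ t * M.N z t ℓ₁)
            (fun t _ => Nat.zero_le _) (Finset.mem_univ ℓ₂)
        have : 0 < M.N z ℓ₁ ℓ₂ * M.N z ℓ₂ ℓ₁ := by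
          rw [hf21 z]
          exact Nat.mul_pos hz1 hz2
        omega
      obtain ⟨s, hs1, hs2⟩ := key2 ℓ₁ z hsum
      exact ⟨s, AddAction.mem_stabilizer_iff.mpr hs1, hs2⟩
  -- characterization of δ ∈ H̄₂
  have char2 : (δ ∈ (AddAction.stabilizer Γ ℓ₂).map (QuotientAddGroup.mk' (twoG Γ))) ↔
      ∃ z : Γ ⧸ twoG Γ, 0 < f z ∧ 0 < f (z + δ) := by
    constructor
    · rintro ⟨s, hs, hsδ⟩
      obtain ⟨t, ht1, ht2⟩ := hterm ℓ₂ 0 (key ℓ₂ s (AddAction.mem_stabilizer_iff.mp hs) hsδ 0)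
      have htorb : sameGOrbit Γ ℓ₁ t := by
        rcases hcov t with h | h
        · exact h
        · exact absurd (hbip2 0 t h) (by omega)
      rcases htorb with ⟨g, rfl⟩
      refine ⟨QuotientAddGroup.mk g, ?_, ?_⟩
      · rw [M.vadd_left, zero_add] at ht2
        exact ht2
      · rw [M.vadd_right, zero_add, hf21] at ht1
        exact ht1
    · rintro ⟨z, hz1, hz2⟩
      have hsum : 0 < ∑ t : L, M.N z ℓ₂ t * M.N z t ℓ₂ := by
        have hle : M.N z ℓ₂ ℓ₁ * M.N z ℓ₁ ℓ₂ ≤ ∑ t : L, M.N z ℓ₂ t * M.N z t ℓ₂ :=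
          Finset.single_le_sum (f := fun t => M.N z ℓ₂ t * M.N z t ℓ₂)
            (fun t _ => Nat.zero_le _) (Finset.mem_univ ℓ₁)
        have : 0 < M.N z ℓ₂ ℓ₁ * M.N z ℓ₁ ℓ₂ := by
          rw [hf21 z]
          exact Nat.mul_pos hz2 hz1
        omega
      obtain ⟨s, hs1, hs2⟩ := key2 ℓ₂ z hsum
      exact ⟨s, AddAction.mem_stabilizer_iff.mpr hs1, hs2⟩
  rw [char1, char2]
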